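/- arXiv:1811.09867 — 4 statements merged into one kernel-verified Lean document; each statement's English description precedes it below -/
import Mathlib

section
/- With ρ as above (ψ continuous nonnegative, n ≥ 2), for all d₂ > d₁ ≥ d₀ one has ∫_{d₁}^{d₂} ρ(t) dt ≤ (2^{n−1}/(n−1)) (ρ(d₁) + ∫_{d₁}^{d₂} ψ(s) ds). In particular, if ∫_{d₀}^∞ ψ < ∞ then ρ is integrable on [d₀, ∞). -/
open MeasureTheory Set

/-
Write `m = n - 1` and `F(t) = ∫_{d₀}^t ψ cosh^m`, so `ρ = F / cosh^m`.
Integrating by parts against the tail primitive of `cosh^{-m}`,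
`∫_{d₁}^{d₂} ρ = F(d₁) ∫_{d₁}^{d₂} cosh^{-m} + ∫_{d₁}^{d₂} ψ(s) cosh^m(s) ∫_s^{d₂} cosh^{-m}`,
and the tail bound `∫_s^∞ cosh^{-m} ≤ (2^m/m) cosh(s)^{-m}` (from `cosh t ≥ eᵗ/2`) turns the
two terms into `(2^m/m) ρ(d₁)` and `(2^m/m) ∫_{d₁}^{d₂} ψ`. Taking `d₁ = d₀`, where `ρ` vanishes,
bounds the integrals of `ρ ≥ 0` over `[d₀, d₂]` uniformly, hence integrability.
-/

namespace Real

lemma exp_div_two_le_cosh (t : ℝ) : exp t / 2 ≤ cosh t := by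
  rw [cosh_eq]
  linarith [exp_pos (-t)]

lemma cosh_le_exp {t : ℝ} (ht : 0 ≤ t) : cosh t ≤ exp t := by
  rw [cosh_eq]
  linarith [exp_le_exp.mpr (neg_le_self ht)]

lemma inv_cosh_pow_le (m : ℕ) (t : ℝ) : (cosh t ^ m)⁻¹ ≤ 2 ^ m * exp (-m * t) := by
  calc (cosh t ^ m)⁻¹ ≤ ((exp t / 2) ^ m)⁻¹ := by gcongr; exact exp_div_two_le_cosh t
    _ = 2 ^ m * exp (-m * t) := by
      rw [div_pow, ← exp_nat_mul, neg_mul, exp_neg]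
      field_simp

lemma exp_neg_mul_le_inv_cosh_pow (m : ℕ) {t : ℝ} (ht : 0 ≤ t) :
    exp (-m * t) ≤ (cosh t ^ m)⁻¹ := by
  rw [neg_mul, exp_neg, exp_nat_mul]
  gcongr
  exact cosh_le_exp ht

lemma continuous_inv_cosh_pow (m : ℕ) : Continuous fun t => (cosh t ^ m)⁻¹ :=
  (continuous_cosh.pow m).inv₀ fun t => (pow_pos (cosh_pos t) m).ne'

lemma integral_exp_mul {c : ℝ} (hc : c ≠ 0) (a b : ℝ) :
    ∫ x in a..b, exp (c * x) = (exp (c * b) - exp (c * a)) / c := by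
  rw [intervalIntegral.integral_comp_mul_left exp hc, integral_exp, smul_eq_mul, inv_mul_eq_div]

lemma integral_inv_cosh_pow_le {m : ℕ} (hm : 1 ≤ m) {a b : ℝ} (ha : 0 ≤ a) (hab : a ≤ b) :
    ∫ t in a..b, (cosh t ^ m)⁻¹ ≤ 2 ^ m / m * (cosh a ^ m)⁻¹ := by
  have hm0 : (0 : ℝ) < m := by exact_mod_cast hm
  calc ∫ t in a..b, (cosh t ^ m)⁻¹ ≤ ∫ t in a..b, 2 ^ m * exp (-m * t) :=
        intervalIntegral.integral_mono_on hab ((continuous_inv_cosh_pow m).intervalIntegrable _ _)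
          (Continuous.intervalIntegrable (by fun_prop) _ _) fun t _ => inv_cosh_pow_le m t
    _ = 2 ^ m / m * (exp (-m * a) - exp (-m * b)) := by
        rw [intervalIntegral.integral_const_mul, integral_exp_mul (neg_ne_zero.mpr hm0.ne')]
        field_simp
        ring
    _ ≤ 2 ^ m / m * exp (-m * a) := by gcongr; linarith [exp_pos (-m * b)]
    _ ≤ 2 ^ m / m * (cosh a ^ m)⁻¹ := by gcongr; exact exp_neg_mul_le_inv_cosh_pow m ha

end Real

namespace intervalIntegral

lemma integral_primitive_mul_eq {u g : ℝ → ℝ} (hu : Continuous u) (hg : Continuous g)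
    (c a b : ℝ) :
    ∫ t in a..b, (∫ s in c..t, u s) * g t =
      (∫ s in c..a, u s) * (∫ t in a..b, g t) + ∫ s in a..b, u s * ∫ t in s..b, g t := by
  rw [integral_mul_deriv_eq_deriv_mul (fun t _ => (hu.integral_hasStrictDerivAt c t).hasDerivAt)
    (fun t _ => (hg.integral_hasStrictDerivAt b t).hasDerivAt)
    (hu.intervalIntegrable a b) (hg.intervalIntegrable a b)]
  simp only [integral_same, integral_symm b, mul_neg, integral_neg]
  ring

end intervalIntegral

open intervalIntegral in
lemma integral_primitive_div_le {ψ w : ℝ → ℝ} {c a b K : ℝ} (hψ : Continuous ψ)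
    (hw : Continuous w) (hw0 : ∀ t, 0 < w t) (hψ0 : ∀ s ∈ Icc c b, 0 ≤ ψ s)
    (hca : c ≤ a) (hab : a ≤ b)
    (htail : ∀ s ∈ Icc a b, ∫ t in s..b, (w t)⁻¹ ≤ K * (w s)⁻¹) :
    ∫ t in a..b, (∫ s in c..t, ψ s * w s) / w t ≤
      K * ((∫ s in c..a, ψ s * w s) / w a + ∫ s in a..b, ψ s) := by
  have hw' : Continuous fun t => (w t)⁻¹ := hw.inv₀ fun t => (hw0 t).ne'
  have htail_cont : Continuous fun s => ∫ t in s..b, (w t)⁻¹ := by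
    simp only [integral_symm b]
    exact (continuous_primitive (fun _ _ => hw'.intervalIntegrable _ _) b).neg
  have hF : 0 ≤ ∫ s in c..a, ψ s * w s :=
    integral_nonneg hca fun s hs => mul_nonneg (hψ0 s ⟨hs.1, hs.2.trans hab⟩) (hw0 s).le
  simp only [div_eq_mul_inv]
  rw [integral_primitive_mul_eq (u := fun s => ψ s * w s) (hψ.mul hw) hw' c a b, mul_add]
  gcongr ?_ + ?_
  · calc (∫ s in c..a, ψ s * w s) * ∫ t in a..b, (w t)⁻¹
        ≤ (∫ s in c..a, ψ s * w s) * (K * (w a)⁻¹) := by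
          gcongr; exact htail a ⟨le_rfl, hab⟩
      _ = K * ((∫ s in c..a, ψ s * w s) * (w a)⁻¹) := by ring
  · rw [← intervalIntegral.integral_const_mul]
    refine integral_mono_on hab (((hψ.mul hw).mul htail_cont).intervalIntegrable _ _)
      ((hψ.const_mul K).intervalIntegrable _ _) fun s hs => ?_
    have hψw : 0 ≤ ψ s * w s := mul_nonneg (hψ0 s ⟨hca.trans hs.1, hs.2⟩) (hw0 s).le
    calc ψ s * w s * ∫ t in s..b, (w t)⁻¹ ≤ ψ s * w s * (K * (w s)⁻¹) := by
          gcongr; exact htail s hs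
      _ = K * ψ s := by field_simp [(hw0 s).ne']

lemma integral_primitive_div_cosh_pow_le {φ : ℝ → ℝ} {m : ℕ} {c a b : ℝ} (hm : 1 ≤ m)
    (hφ : Continuous φ) (hφ0 : ∀ s ∈ Icc c b, 0 ≤ φ s) (hc : 0 ≤ c) (hca : c ≤ a) (hab : a ≤ b) :
    ∫ t in a..b, (∫ s in c..t, φ s * Real.cosh s ^ m) / Real.cosh t ^ m ≤
      2 ^ m / m * ((∫ s in c..a, φ s * Real.cosh s ^ m) / Real.cosh a ^ m + ∫ s in a..b, φ s) :=
  integral_primitive_div_le hφ (by fun_prop) (fun t => pow_pos (Real.cosh_pos t) m) hφ0 hca hab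
    fun s hs => Real.integral_inv_cosh_pow_le hm (hc.trans (hca.trans hs.1)) hs.2

lemma integrableOn_Ici_of_intervalIntegral_le_mul {f g : ℝ → ℝ} {a K : ℝ}
    (hf : ∀ b, IntegrableOn f (Icc a b)) (hf0 : ∀ x ∈ Ici a, 0 ≤ f x)
    (hg : IntegrableOn g (Ici a)) (hg0 : ∀ x ∈ Ici a, 0 ≤ g x) (hK : 0 ≤ K)
    (hfg : ∀ b, a ≤ b → ∫ x in a..b, f x ≤ K * ∫ x in a..b, g x) : IntegrableOn f (Ici a) := by
  rw [integrableOn_Ici_iff_integrableOn_Ioi]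
  refine integrableOn_Ioi_of_intervalIntegral_norm_bounded (b := fun i : ℕ => a + i)
    (K * ∫ x in Ici a, g x) a (fun i => (hf _).mono_set Ioc_subset_Icc_self)
    (Filter.tendsto_atTop_add_const_left _ a tendsto_natCast_atTop_atTop)
    (Filter.Eventually.of_forall fun i => ?_)
  have hle : a ≤ a + i := le_add_of_nonneg_right i.cast_nonneg
  calc ∫ x in a..a + i, ‖f x‖ = ∫ x in a..a + i, f x :=
        intervalIntegral.integral_congr fun x hx =>
          Real.norm_of_nonneg (hf0 x (uIcc_of_le hle ▸ hx).1)
    _ ≤ K * ∫ x in a..a + i, g x := hfg _ hle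
    _ ≤ K * ∫ x in Ici a, g x := by
        rw [intervalIntegral.integral_of_le hle]
        gcongr
        · exact (ae_restrict_mem measurableSet_Ici).mono hg0
        · exact Ioc_subset_Icc_self.trans Icc_subset_Ici_self

/-- With `ρ(d) = cosh(d)^{-(n-1)} ∫_{d₀}^d ψ(s) cosh^{n-1}(s) ds`, for
`d₂ > d₁ ≥ d₀` one has
`∫_{d₁}^{d₂} ρ ≤ (2^{n-1}/(n-1)) (ρ(d₁) + ∫_{d₁}^{d₂} ψ)`;
in particular, if `ψ` is integrable on `[d₀,∞)` then so is `ρ`. -/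
theorem stmt_4 (n : ℕ) (hn : 2 ≤ n) (d₀ : ℝ) (hd₀ : 0 ≤ d₀)
    (ψ : ℝ → ℝ) (hψc : ContinuousOn ψ (Set.Ici d₀))
    (hψ0 : ∀ d ∈ Set.Ici d₀, 0 ≤ ψ d)
    (ρ : ℝ → ℝ)
    (hρ : ∀ d, ρ d = (∫ s in d₀..d, ψ s * Real.cosh s ^ (n - 1)) /
        Real.cosh d ^ (n - 1)) :
    (∀ d₁ d₂ : ℝ, d₀ ≤ d₁ → d₁ < d₂ →
      (∫ t in d₁..d₂, ρ t) ≤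
        2 ^ (n - 1) / (n - 1) * (ρ d₁ + ∫ s in d₁..d₂, ψ s)) ∧
      (IntegrableOn ψ (Set.Ici d₀) → IntegrableOn ρ (Set.Ici d₀)) := by
  set m := n - 1
  have hm : ((m : ℕ) : ℝ) = n - 1 := by rw [Nat.cast_sub (by omega), Nat.cast_one]
  set φ : ℝ → ℝ := fun x => ψ (max x d₀)
  have hφ : Continuous φ :=
    hψc.comp_continuous (continuous_id.max continuous_const) fun x => le_max_right x d₀
  have hφ0 : ∀ x, 0 ≤ φ x := fun x => hψ0 _ (le_max_right x d₀)
  have hφψ : EqOn φ ψ (Ici d₀) := fun x hx => by simp only [φ, max_eq_left (mem_Ici.mp hx)]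
  set F : ℝ → ℝ := fun t => ∫ s in d₀..t, φ s * Real.cosh s ^ m
  have hρF : EqOn ρ (fun d => F d / Real.cosh d ^ m) (Ici d₀) := fun d hd => by
    rw [hρ d]
    congr 1
    exact intervalIntegral.integral_congr fun s hs => by
      rw [hφψ (uIcc_of_le (mem_Ici.mp hd) ▸ hs).1]
  have key : ∀ d₁ d₂, d₀ ≤ d₁ → d₁ ≤ d₂ →
      ∫ t in d₁..d₂, ρ t ≤ 2 ^ m / m * (ρ d₁ + ∫ s in d₁..d₂, ψ s) := by
    intro d₁ d₂ h₀₁ h₁₂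
    have hsub : uIcc d₁ d₂ ⊆ Ici d₀ := by
      rw [uIcc_of_le h₁₂]; exact Icc_subset_Ici_self.trans (Ici_subset_Ici.mpr h₀₁)
    rw [intervalIntegral.integral_congr (hρF.mono hsub), hρF (mem_Ici.mpr h₀₁),
      ← intervalIntegral.integral_congr (hφψ.mono hsub)]
    exact integral_primitive_div_cosh_pow_le (by omega) hφ (fun s _ => hφ0 s) hd₀ h₀₁ h₁₂
  have hF : Continuous F := intervalIntegral.continuous_primitive
    (fun _ _ => (Continuous.intervalIntegrable (by fun_prop) _ _)) d₀
  have hρ_cont : ContinuousOn ρ (Ici d₀) :=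
    (hF.div (by fun_prop) fun d => (pow_pos (Real.cosh_pos d) m).ne').continuousOn.congr hρF
  have hρ_nonneg : ∀ x ∈ Ici d₀, 0 ≤ ρ x := fun x hx => by
    rw [hρF hx]
    exact div_nonneg (intervalIntegral.integral_nonneg hx fun s _ =>
      mul_nonneg (hφ0 s) (by positivity)) (by positivity)
  have hρ_d₀ : ρ d₀ = 0 := by rw [hρ, intervalIntegral.integral_same, zero_div]
  refine ⟨fun d₁ d₂ h₀₁ h₁₂ => hm ▸ key d₁ d₂ h₀₁ h₁₂.le, fun hψi =>
    integrableOn_Ici_of_intervalIntegral_le_mul (K := 2 ^ m / m)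
      (fun b => (hρ_cont.mono Icc_subset_Ici_self).integrableOn_Icc) hρ_nonneg hψi hψ0
      (by positivity) fun b hb => by simpa [hρ_d₀] using key d₀ b le_rfl hb⟩
end

section
/- The pair (W, G) with G(d) = −cosh^{−(n−1)}(d) and W(d) = h − ∫_{d₀}^d (cosh^{2n−2}(t) − 1)^{−1/2} dt solves the system W′(d) = G(d)/√(1 − G(d)²), G′(d) = −(n−1) tanh(d) G(d) on (0, ∞), with G(d₀) = −cosh^{−(n−1)}(d₀) and W(d₀) = h. -/
/-! Both equations follow by direct differentiation: `W'` from the fundamental theorem of calculus,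
the integrand being continuous on `(0, ∞) ∋ d₀`, and the identity
`c⁻¹ / √(1 - c⁻²) = 1 / √(c² - 1)` with `c = cosh^{n-1} d` matches it with `G / √(1 - G²)`. -/

open Real Set

theorem hasDerivAt_intervalIntegral_of_continuousOn {E : Type*} [NormedAddCommGroup E]
    [NormedSpace ℝ E] [CompleteSpace E] {f : ℝ → E} {s : Set ℝ} (hs : IsOpen s)
    (hs' : s.OrdConnected) (hf : ContinuousOn f s) {a x : ℝ} (ha : a ∈ s) (hx : x ∈ s) :
    HasDerivAt (fun y => ∫ t in a..y, f t) (f x) x :=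
  intervalIntegral.integral_hasDerivAt_right
    (hf.mono (hs'.uIcc_subset ha hx)).intervalIntegrable
    (hf.stronglyMeasurableAtFilter hs x hx) (hf.continuousAt (hs.mem_nhds hx))

/-- For `c < 1` both sides are `0`, through `√` of a negative number. -/
theorem inv_div_sqrt_one_sub_inv_sq {c : ℝ} (hc : 0 < c) :
    c⁻¹ / √(1 - c⁻¹ ^ 2) = (√(c ^ 2 - 1))⁻¹ := by
  have h : 1 - c⁻¹ ^ 2 = (c ^ 2 - 1) / c ^ 2 := by field_simp
  rw [h, sqrt_div' _ (by positivity), sqrt_sq hc.le, div_div_eq_mul_div, inv_mul_cancel₀ hc.ne',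
    one_div]

theorem hasDerivAt_inv_cosh_pow (m : ℕ) (x : ℝ) :
    HasDerivAt (fun x => (cosh x ^ m)⁻¹) (-m * tanh x * (cosh x ^ m)⁻¹) x := by
  have hc : cosh x ≠ 0 := (cosh_pos x).ne'
  refine (((hasDerivAt_cosh x).pow m).inv (pow_ne_zero m hc)).congr_deriv ?_
  rw [tanh_eq_sinh_div_cosh]
  rcases m with _ | m
  · simp
  · simp only [Pi.pow_apply, Nat.add_sub_cancel]
    field_simp
    ring

theorem continuousOn_inv_sqrt_cosh_pow_sub_one {k : ℕ} (hk : k ≠ 0) :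
    ContinuousOn (fun t => (√(cosh t ^ k - 1))⁻¹) {0}ᶜ := by
  intro t ht
  refine (ContinuousAt.inv₀ (by fun_prop) ?_).continuousWithinAt
  have : 1 < cosh t ^ k := one_lt_pow₀ (one_lt_cosh.mpr ht) hk
  exact (sqrt_pos.mpr (sub_pos.mpr this)).ne'

/-- The pair `(W, G)` with `G(d) = -cosh^{-(n-1)}(d)` and
`W(d) = h - ∫_{d₀}^d (cosh^{2(n-1)}(t) - 1)^{-1/2} dt` solves the system
`W' = G/√(1-G²)`, `G' = -(n-1) tanh · G` on `(0,∞)` with the stated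
initial values at `d₀`. -/
theorem stmt_6 (n : ℕ) (hn : 2 ≤ n) (d₀ h : ℝ) (hd₀ : 0 < d₀) :
    ∀ G W : ℝ → ℝ,
      (G = fun d => -(Real.cosh d ^ (n - 1))⁻¹) →
      (W = fun d => h - ∫ t in d₀..d,
          (Real.sqrt (Real.cosh t ^ (2 * (n - 1)) - 1))⁻¹) →
      (∀ d ∈ Set.Ioi (0:ℝ),
        HasDerivAt W (G d / Real.sqrt (1 - G d ^ 2)) d ∧
        HasDerivAt G (-(n - 1) * Real.tanh d * G d) d) ∧
      G d₀ = -(Real.cosh d₀ ^ (n - 1))⁻¹ ∧ W d₀ = h := by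
  rintro G W rfl rfl
  refine ⟨fun d hd => ⟨?_, ?_⟩, rfl, by simp⟩
  · have hf := (continuousOn_inv_sqrt_cosh_pow_sub_one (k := 2 * (n - 1)) (by omega)).mono
      fun t (ht : 0 < t) => ht.ne'
    refine ((hasDerivAt_const d h).sub (hasDerivAt_intervalIntegral_of_continuousOn isOpen_Ioi
      ordConnected_Ioi hf hd₀ hd)).congr_deriv ?_
    rw [neg_sq, neg_div, inv_div_sqrt_one_sub_inv_sq (by positivity), ← pow_mul, mul_comm,
      zero_sub]
  · refine (hasDerivAt_inv_cosh_pow (n - 1) d).neg.congr_deriv ?_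
    rw [Nat.cast_pred (by omega)]
    ring
end

section
/- Let a : [d₀,∞) → ℝ solve a′(d) = −ψ(d) − (n−1) tanh(d) a(d) with a(d₀) = γ ≤ −1/2, where ψ : [d₀,∞) → [0,∞) is C¹, decreasing, and (n−1)/2 · tanh(d₀) − ψ(d₀) > 0. Then a′(d) ≥ 0 for all d ≥ d₀, i.e. a is nondecreasing on [d₀, ∞). -/
/-!
With `k = n - 1`, `cosh ^ k` is an integrating factor for `y' + k tanh · y`:
`(y cosh ^ k)' = (y' + k tanh · y) cosh ^ k`. For `y = -a` the bracket is `ψ ≥ 0`, so `-a` stays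
positive. For `y = a'` (differentiate the equation once) it is `-ψ' - k (1 - tanh²) a ≥ 0`,
because `ψ` is nonincreasing and `a < 0`; since `a'(d₀) > 0`, `a'` stays positive as well.
-/

open Set Topology Real

namespace Real

theorem hasDerivAt_tanh (x : ℝ) : HasDerivAt tanh (1 - tanh x ^ 2) x := by
  rw [show tanh = sinh / cosh from funext tanh_eq_sinh_div_cosh]
  refine ((hasDerivAt_sinh x).div (hasDerivAt_cosh x) (cosh_pos x).ne').congr_deriv ?_
  have := (cosh_pos x).ne'
  rw [Pi.div_apply]
  field_simp

theorem hasDerivAt_cosh_rpow (r x : ℝ) :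
    HasDerivAt (fun t => cosh t ^ r) (r * tanh x * cosh x ^ r) x := by
  refine ((hasDerivAt_cosh x).rpow_const (p := r) (Or.inl (cosh_pos x).ne')).congr_deriv ?_
  rw [rpow_sub_one (cosh_pos x).ne', tanh_eq_sinh_div_cosh]
  ring

theorem continuous_tanh : Continuous tanh :=
  continuous_iff_continuousAt.2 fun x => (hasDerivAt_tanh x).continuousAt

end Real

theorem HasDerivAt.nonpos_of_antitoneOn {g : ℝ → ℝ} {g' x : ℝ} {s : Set ℝ}
    (hd : HasDerivAt g g' x) (hg : AntitoneOn g s) (hs : s ∈ 𝓝 x) : g' ≤ 0 := by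
  refine hd.hasDerivWithinAt.nonpos_of_antitoneOn (accPt_iff_nhds.2 fun U hU => ?_) hg
  obtain ⟨y, ⟨hyU, -⟩, hyx⟩ :=
    accPt_iff_nhds.1 (PerfectSpace.univ_preperfect x (mem_univ x)) _ (Filter.inter_mem hU hs)
  exact ⟨y, hyU, hyx⟩

section IntegratingFactor

variable {y y' p C : ℝ → ℝ}

theorem monotoneOn_mul_of_deriv_add_mul_nonneg {D : Set ℝ} (hD : Convex ℝ D)
    (hy : ContinuousOn y D) (hC : ContinuousOn C D)
    (hy' : ∀ t ∈ interior D, HasDerivAt y (y' t) t)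
    (hC' : ∀ t ∈ interior D, HasDerivAt C (p t * C t) t)
    (hC₀ : ∀ t ∈ interior D, 0 ≤ C t) (h : ∀ t ∈ interior D, 0 ≤ y' t + p t * y t) :
    MonotoneOn (fun t => y t * C t) D :=
  monotoneOn_of_hasDerivWithinAt_nonneg hD (hy.mul hC)
    (fun t ht => ((hy' t ht).mul (hC' t ht)).hasDerivWithinAt)
    (fun t ht => by nlinarith [h t ht, hC₀ t ht])

theorem pos_of_deriv_add_mul_nonneg {x₀ x : ℝ}
    (hy : ContinuousOn y (Ici x₀)) (hC : ContinuousOn C (Ici x₀))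
    (hy' : ∀ t ∈ Ioi x₀, HasDerivAt y (y' t) t)
    (hC' : ∀ t ∈ Ioi x₀, HasDerivAt C (p t * C t) t)
    (hC₀ : ∀ t ∈ Ici x₀, 0 < C t) (h : ∀ t ∈ Ioi x₀, 0 ≤ y' t + p t * y t)
    (hy₀ : 0 < y x₀) (hx : x₀ ≤ x) : 0 < y x := by
  rw [← interior_Ici] at hy' hC' h
  have hmono := monotoneOn_mul_of_deriv_add_mul_nonneg (convex_Ici x₀) hy hC hy' hC'
    (fun t ht => (hC₀ t (interior_subset ht)).le) h self_mem_Ici hx hx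
  have := hC₀ x₀ self_mem_Ici
  have := hC₀ x hx
  by_contra! hyx
  nlinarith

end IntegratingFactor

section TanhODE

variable {ψ a : ℝ → ℝ} {k d₀ : ℝ}

theorem neg_of_tanh_ode (hψ0 : ∀ d ∈ Ici d₀, 0 ≤ ψ d)
    (ha' : ∀ d ∈ Ici d₀, HasDerivAt a (-ψ d - k * tanh d * a d) d) (ha₀ : a d₀ < 0) :
    ∀ d ∈ Ici d₀, a d < 0 := fun d hd =>
  neg_pos.1 <| pos_of_deriv_add_mul_nonneg (y := fun t => -a t)
    (y' := fun t => ψ t + k * tanh t * a t) (p := fun t => k * tanh t)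
    (fun t ht => (ha' t ht).continuousAt.continuousWithinAt.neg)
    (continuous_cosh.rpow_const fun t => Or.inl (cosh_pos t).ne').continuousOn
    (fun t ht => (ha' t (mem_Ici_of_Ioi ht)).neg.congr_deriv (by ring))
    (fun t _ => hasDerivAt_cosh_rpow k t) (fun t _ => rpow_pos_of_pos (cosh_pos t) k)
    (fun t ht => by nlinarith [hψ0 t (mem_Ici_of_Ioi ht)]) (neg_pos.2 ha₀) hd

theorem pos_of_tanh_ode (hk : 0 ≤ k) (hψc : ContinuousOn ψ (Ici d₀))
    (hψd : DifferentiableOn ℝ ψ (Ioi d₀)) (hψa : AntitoneOn ψ (Ici d₀))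
    (ha' : ∀ d ∈ Ici d₀, HasDerivAt a (-ψ d - k * tanh d * a d) d)
    (ha : ∀ d ∈ Ici d₀, a d < 0) (h₀ : 0 < -ψ d₀ - k * tanh d₀ * a d₀) :
    ∀ d ∈ Ici d₀, 0 < -ψ d - k * tanh d * a d := by
  set f : ℝ → ℝ := fun t => -ψ t - k * tanh t * a t
  have hψ' (t : ℝ) (ht : t ∈ Ioi d₀) : HasDerivAt ψ (deriv ψ t) t :=
    ((hψd t ht).differentiableAt (Ioi_mem_nhds ht)).hasDerivAt
  have hf' (t : ℝ) (ht : t ∈ Ioi d₀) :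
      HasDerivAt f (-deriv ψ t - k * ((1 - tanh t ^ 2) * a t + tanh t * f t)) t := by
    refine ((hψ' t ht).neg.sub
      (((hasDerivAt_tanh t).const_mul k).fun_mul (ha' t (mem_Ici_of_Ioi ht)))).congr_deriv ?_
    ring
  have hf_forcing (t : ℝ) (ht : t ∈ Ioi d₀) :
      0 ≤ -deriv ψ t - k * ((1 - tanh t ^ 2) * a t + tanh t * f t) + k * tanh t * f t := by
    have hψ't : deriv ψ t ≤ 0 := (hψ' t ht).nonpos_of_antitoneOn hψa (Ici_mem_nhds ht)
    have hsech : 0 ≤ 1 - tanh t ^ 2 := by linarith [tanh_sq_lt_one t]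
    have := mul_nonpos_of_nonneg_of_nonpos (mul_nonneg hk hsech) (ha t (mem_Ici_of_Ioi ht)).le
    nlinarith
  have ha_cont : ContinuousOn a (Ici d₀) := fun t ht =>
    (ha' t ht).continuousAt.continuousWithinAt
  exact fun d hd => pos_of_deriv_add_mul_nonneg (y := f) (p := fun t => k * tanh t)
    (hψc.neg.sub ((continuous_tanh.continuousOn.const_smul k).mul ha_cont))
    (continuous_cosh.rpow_const fun t => Or.inl (cosh_pos t).ne').continuousOn
    hf' (fun t _ => hasDerivAt_cosh_rpow k t) (fun t _ => rpow_pos_of_pos (cosh_pos t) k)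
    hf_forcing h₀ hd

end TanhODE

theorem stmt_15_general (n : ℕ) (hn : 2 ≤ n) (d₀ γ : ℝ)
    (hγ : γ ≤ -(1/2))
    (ψ a : ℝ → ℝ)
    (hψC1 : ContDiffOn ℝ 1 ψ (Set.Ici d₀))
    (hψ0 : ∀ d ∈ Set.Ici d₀, 0 ≤ ψ d)
    (hψa : AntitoneOn ψ (Set.Ici d₀))
    (hpos : (n - 1) / 2 * Real.tanh d₀ - ψ d₀ > 0)
    (ha' : ∀ d ∈ Set.Ici d₀,
      HasDerivAt a (-ψ d - (n - 1) * Real.tanh d * a d) d)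
    (ha0 : a d₀ = γ) :
    (∀ d ∈ Set.Ici d₀, 0 ≤ -ψ d - (n - 1) * Real.tanh d * a d) ∧
      MonotoneOn a (Set.Ici d₀) := by
  set k : ℝ := n - 1
  have hk : 0 ≤ k := by
    have : (2 : ℝ) ≤ n := by exact_mod_cast hn
    linarith
  have ha_neg := neg_of_tanh_ode hψ0 ha' (by linarith)
  have h₀ : 0 < -ψ d₀ - k * tanh d₀ * a d₀ := by
    have hkt : 0 ≤ k * tanh d₀ := by linarith [hψ0 d₀ self_mem_Ici]
    rw [ha0]
    nlinarith [mul_le_mul_of_nonneg_left hγ hkt]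
  have hderiv_pos := pos_of_tanh_ode hk hψC1.continuousOn
    ((hψC1.differentiableOn one_ne_zero).mono Ioi_subset_Ici_self) hψa ha' ha_neg h₀
  refine ⟨fun d hd => (hderiv_pos d hd).le, ?_⟩
  exact monotoneOn_of_hasDerivWithinAt_nonneg (convex_Ici d₀)
    (fun d hd => (ha' d hd).continuousAt.continuousWithinAt)
    (fun d hd => (ha' d (interior_subset hd)).hasDerivWithinAt)
    (fun d hd => (hderiv_pos d (interior_subset hd)).le)

/-- Let `a` solve `a' = -ψ - (n-1) tanh · a` on `[d₀,∞)` with `a(d₀) = γ ≤ -1/2`,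
where `ψ ≥ 0` is `C¹` and nonincreasing on `[d₀,∞)` and
`(n-1)/2 · tanh(d₀) - ψ(d₀) > 0`. Then `a' ≥ 0` on `[d₀,∞)`, i.e. `a` is
nondecreasing there. -/
theorem stmt_15 (n : ℕ) (hn : 2 ≤ n) (d₀ γ : ℝ) (hd₀ : 0 < d₀)
    (hγ : γ ≤ -(1/2))
    (ψ a : ℝ → ℝ)
    (hψC1 : ContDiffOn ℝ 1 ψ (Set.Ici d₀))
    (hψ0 : ∀ d ∈ Set.Ici d₀, 0 ≤ ψ d)
    (hψa : AntitoneOn ψ (Set.Ici d₀))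
    (hpos : (n - 1) / 2 * Real.tanh d₀ - ψ d₀ > 0)
    (ha' : ∀ d ∈ Set.Ici d₀,
      HasDerivAt a (-ψ d - (n - 1) * Real.tanh d * a d) d)
    (ha0 : a d₀ = γ) :
    (∀ d ∈ Set.Ici d₀, 0 ≤ -ψ d - (n - 1) * Real.tanh d * a d) ∧
      MonotoneOn a (Set.Ici d₀) :=
  stmt_15_general n hn d₀ γ hγ ψ a hψC1 hψ0 hψa hpos ha' ha0
end

section
/- Comparison of the full ODE system: suppose (w₁,g₁) and (w₂,g₂) both solve w′ = g/√(1−g²), g′ = −(n−1) tanh(d) g − ψ(d, w) on an interval (0, d₀], with ψ(d, ·) nonincreasing in the second variable, and both satisfy g(0⁺) = −1. If g₁(d₀) > g₂(d₀) and w₁(d₀) = w₂(d₀) = h, then a contradiction arises; i.e., the value γ = g(d₀) of such a solution with g(0⁺) = −1 is unique. -/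
open Filter Topology Set

/-!
Suppose `g₁(d₀) > g₂(d₀)`. Since `g₁ - g₂ → 0` at `0⁺`, there is a last point `a < d₀` with
`g₁(a) - g₂(a) ≤ (g₁(d₀) - g₂(d₀)) / 2`. On `(a, d₀)` we have `g₁ > g₂`, so `w₁' > w₂'`
because `z ↦ z / √(1 - z²)` is increasing; as `w₁(d₀) = w₂(d₀)`, this forces `w₁ < w₂` there,
hence `ψ(·, w₁) ≥ ψ(·, w₂)` and `(g₁ - g₂)' ≤ -(n - 1) tanh · (g₁ - g₂) ≤ 0`. So `g₁ - g₂` cannot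
grow from `a` to `d₀`, a contradiction.
-/

theorem strictMonoOn_div_sqrt_one_sub_sq :
    StrictMonoOn (fun x : ℝ => x / √(1 - x ^ 2)) (Ioo (-1) 1) := by
  intro x hx y hy hxy
  have harcsin : ∀ z ∈ Ioo (-1 : ℝ) 1, Real.arcsin z ∈ Ioo (-(Real.pi / 2)) (Real.pi / 2) := fun z hz =>
    ⟨Real.neg_pi_div_two_lt_arcsin.2 hz.1, Real.arcsin_lt_pi_div_two.2 hz.2⟩
  simp only [← Real.tan_arcsin]
  exact Real.strictMonoOn_tan (harcsin x hx) (harcsin y hy)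
    (Real.strictMonoOn_arcsin (Ioo_subset_Icc_self hx) (Ioo_subset_Icc_self hy) hxy)

theorem exists_last_le_of_continuousOn {u : ℝ → ℝ} {a b c : ℝ} (hab : a ≤ b)
    (hu : ContinuousOn u (Icc a b)) (ha : u a ≤ c) (hb : c < u b) :
    ∃ x ∈ Ico a b, u x ≤ c ∧ ∀ y ∈ Ioc x b, c < u y := by
  set A := Icc a b ∩ u ⁻¹' Iic c
  have hA : IsCompact A := isCompact_Icc.of_isClosed_subset
    (hu.preimage_isClosed_of_isClosed isClosed_Icc isClosed_Iic) inter_subset_left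
  have hmem : sSup A ∈ A := hA.sSup_mem ⟨a, left_mem_Icc.2 hab, ha⟩
  have hlt : sSup A < b := hmem.1.2.lt_of_ne fun h => (h ▸ hmem.2 : u b ≤ c).not_gt hb
  refine ⟨sSup A, ⟨hmem.1.1, hlt⟩, hmem.2, fun y hy => ?_⟩
  by_contra! hyc
  exact hy.1.not_ge (le_csSup hA.bddAbove ⟨⟨hmem.1.1.trans hy.1.le, hy.2⟩, hyc⟩)

structure IsSolution (n : ℕ) (ψ : ℝ → ℝ → ℝ) (w g : ℝ → ℝ) : Prop where
  mem_Ioo : ∀ d ∈ Ioi (0 : ℝ), g d ∈ Ioo (-1 : ℝ) 1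
  hasDerivAt_w : ∀ d ∈ Ioi (0 : ℝ), HasDerivAt w (g d / √(1 - g d ^ 2)) d
  hasDerivAt_g : ∀ d ∈ Ioi (0 : ℝ), HasDerivAt g (-(n - 1) * Real.tanh d * g d - ψ d (w d)) d

namespace IsSolution

variable {n : ℕ} {ψ : ℝ → ℝ → ℝ} {w₁ g₁ w₂ g₂ : ℝ → ℝ} {a b : ℝ}

theorem continuousOn_sub_w (h₁ : IsSolution n ψ w₁ g₁) (h₂ : IsSolution n ψ w₂ g₂) :
    ContinuousOn (fun d => w₁ d - w₂ d) (Ioi 0) := fun x hx =>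
  ((h₁.hasDerivAt_w x hx).sub (h₂.hasDerivAt_w x hx)).continuousAt.continuousWithinAt

theorem continuousOn_sub_g (h₁ : IsSolution n ψ w₁ g₁) (h₂ : IsSolution n ψ w₂ g₂) :
    ContinuousOn (fun d => g₁ d - g₂ d) (Ioi 0) := fun x hx =>
  ((h₁.hasDerivAt_g x hx).sub (h₂.hasDerivAt_g x hx)).continuousAt.continuousWithinAt

theorem strictMonoOn_sub_w (h₁ : IsSolution n ψ w₁ g₁) (h₂ : IsSolution n ψ w₂ g₂)
    (ha : 0 < a) (hg : ∀ x ∈ Ioo a b, g₂ x < g₁ x) :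
    StrictMonoOn (fun d => w₁ d - w₂ d) (Icc a b) := by
  have hpos : ∀ x ∈ Ioo a b, x ∈ Ioi (0 : ℝ) := fun x hx => ha.trans hx.1
  refine strictMonoOn_of_hasDerivWithinAt_pos (convex_Icc a b)
    (f' := fun x => g₁ x / √(1 - g₁ x ^ 2) - g₂ x / √(1 - g₂ x ^ 2))
    ((h₁.continuousOn_sub_w h₂).mono fun x hx => ha.trans_le hx.1)
    (fun x hx => ?_) (fun x hx => ?_) <;> rw [interior_Icc] at hx
  · exact ((h₁.hasDerivAt_w x (hpos x hx)).sub (h₂.hasDerivAt_w x (hpos x hx))).hasDerivWithinAt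
  · exact sub_pos.2 <| strictMonoOn_div_sqrt_one_sub_sq (h₂.mem_Ioo x (hpos x hx))
      (h₁.mem_Ioo x (hpos x hx)) (hg x hx)

theorem antitoneOn_sub_g (h₁ : IsSolution n ψ w₁ g₁) (h₂ : IsSolution n ψ w₂ g₂)
    (hn : 1 ≤ n) (hψ : ∀ d, Antitone (ψ d)) (ha : 0 < a)
    (hg : ∀ x ∈ Ioo a b, g₂ x ≤ g₁ x) (hw : ∀ x ∈ Ioo a b, w₁ x ≤ w₂ x) :
    AntitoneOn (fun d => g₁ d - g₂ d) (Icc a b) := by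
  have hpos : ∀ x ∈ Ioo a b, x ∈ Ioi (0 : ℝ) := fun x hx => ha.trans hx.1
  refine antitoneOn_of_hasDerivWithinAt_nonpos (convex_Icc a b)
    (f' := fun x => (-(n - 1) * Real.tanh x * g₁ x - ψ x (w₁ x)) -
      (-(n - 1) * Real.tanh x * g₂ x - ψ x (w₂ x)))
    ((h₁.continuousOn_sub_g h₂).mono fun x hx => ha.trans_le hx.1)
    (fun x hx => ?_) (fun x hx => ?_) <;> rw [interior_Icc] at hx
  · exact ((h₁.hasDerivAt_g x (hpos x hx)).sub (h₂.hasDerivAt_g x (hpos x hx))).hasDerivWithinAt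
  · have htanh : 0 ≤ Real.tanh x := by
      rw [Real.tanh_eq_sinh_div_cosh]
      exact div_nonneg (Real.sinh_pos_iff.2 (hpos x hx)).le (Real.cosh_pos x).le
    have hn' : (0 : ℝ) ≤ n - 1 := sub_nonneg.2 (by exact_mod_cast hn)
    have hψle : ψ x (w₂ x) ≤ ψ x (w₁ x) := hψ x (hw x hx)
    nlinarith [mul_nonneg (mul_nonneg hn' htanh) (sub_nonneg.2 (hg x hx))]

theorem sub_g_le_of_forall_Ioo_lt (h₁ : IsSolution n ψ w₁ g₁) (h₂ : IsSolution n ψ w₂ g₂)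
    (hn : 1 ≤ n) (hψ : ∀ d, Antitone (ψ d)) (ha : 0 < a) (hab : a ≤ b) (hw : w₁ b = w₂ b)
    (hg : ∀ x ∈ Ioo a b, g₂ x < g₁ x) :
    g₁ b - g₂ b ≤ g₁ a - g₂ a := by
  have hW := h₁.strictMonoOn_sub_w h₂ ha hg
  have hw_le : ∀ x ∈ Ioo a b, w₁ x ≤ w₂ x := fun x hx => by
    have := hW ⟨hx.1.le, hx.2.le⟩ (right_mem_Icc.2 hab) hx.2
    dsimp only at this
    linarith
  exact h₁.antitoneOn_sub_g h₂ hn hψ ha (fun x hx => (hg x hx).le) hw_le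
    (left_mem_Icc.2 hab) (right_mem_Icc.2 hab) hab

theorem g_le_of_w_eq (h₁ : IsSolution n ψ w₁ g₁) (h₂ : IsSolution n ψ w₂ g₂)
    (hn : 1 ≤ n) (hψ : ∀ d, Antitone (ψ d)) {d₀ L : ℝ} (hd₀ : 0 < d₀) (hw : w₁ d₀ = w₂ d₀)
    (hg₁ : Tendsto g₁ (𝓝[>] 0) (𝓝 L)) (hg₂ : Tendsto g₂ (𝓝[>] 0) (𝓝 L)) :
    g₁ d₀ ≤ g₂ d₀ := by
  by_contra! hlt
  set c := (g₁ d₀ - g₂ d₀) / 2 with hc_def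
  have hc : 0 < c := half_pos (sub_pos.2 hlt)
  have hsmall : ∀ᶠ d in 𝓝[>] 0, g₁ d - g₂ d < c := by
    have := hg₁.sub hg₂
    rw [sub_self] at this
    exact this.eventually_lt_const hc
  obtain ⟨d₁, hd₁c, hd₁⟩ := (hsmall.and (Ioo_mem_nhdsGT hd₀)).exists
  obtain ⟨a, ha, hac, hgt⟩ := exists_last_le_of_continuousOn hd₁.2.le
    ((h₁.continuousOn_sub_g h₂).mono fun x hx => hd₁.1.trans_le hx.1) hd₁c.le
    (by linarith [hc_def] : c < g₁ d₀ - g₂ d₀)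
  have := h₁.sub_g_le_of_forall_Ioo_lt h₂ hn hψ (hd₁.1.trans_le ha.1) ha.2.le hw
    fun x hx => sub_pos.1 (hc.trans (hgt x (Ioo_subset_Ioc_self hx)))
  linarith [hc_def]

end IsSolution

theorem stmt_16_general (n : ℕ) (hn : 2 ≤ n) (d₀ h : ℝ) (hd₀ : 0 < d₀)
    (ψ : ℝ → ℝ → ℝ)
    (hψmono : ∀ d, Antitone (ψ d))
    (w₁ g₁ w₂ g₂ : ℝ → ℝ)
    (hg₁ : ∀ d ∈ Set.Ioi (0:ℝ), g₁ d ∈ Set.Ioo (-1 : ℝ) 1)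
    (hg₂ : ∀ d ∈ Set.Ioi (0:ℝ), g₂ d ∈ Set.Ioo (-1 : ℝ) 1)
    (hw₁' : ∀ d ∈ Set.Ioi (0:ℝ),
      HasDerivAt w₁ (g₁ d / Real.sqrt (1 - g₁ d ^ 2)) d)
    (hw₂' : ∀ d ∈ Set.Ioi (0:ℝ),
      HasDerivAt w₂ (g₂ d / Real.sqrt (1 - g₂ d ^ 2)) d)
    (hg₁' : ∀ d ∈ Set.Ioi (0:ℝ),
      HasDerivAt g₁ (-(n - 1) * Real.tanh d * g₁ d - ψ d (w₁ d)) d)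
    (hg₂' : ∀ d ∈ Set.Ioi (0:ℝ),
      HasDerivAt g₂ (-(n - 1) * Real.tanh d * g₂ d - ψ d (w₂ d)) d)
    (hw₁0 : w₁ d₀ = h) (hw₂0 : w₂ d₀ = h)
    (hg₁lim : Tendsto g₁ (nhdsWithin 0 (Set.Ioi 0)) (nhds (-1)))
    (hg₂lim : Tendsto g₂ (nhdsWithin 0 (Set.Ioi 0)) (nhds (-1))) :
    g₁ d₀ = g₂ d₀ := by
  have h₁ : IsSolution n ψ w₁ g₁ := ⟨hg₁, hw₁', hg₁'⟩
  have h₂ : IsSolution n ψ w₂ g₂ := ⟨hg₂, hw₂', hg₂'⟩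
  have hn' : 1 ≤ n := by omega
  exact le_antisymm
    (h₁.g_le_of_w_eq h₂ hn' hψmono hd₀ (hw₁0.trans hw₂0.symm) hg₁lim hg₂lim)
    (h₂.g_le_of_w_eq h₁ hn' hψmono hd₀ (hw₂0.trans hw₁0.symm) hg₂lim hg₁lim)

/-- Uniqueness of the initial slope: if `(w₁,g₁)` and `(w₂,g₂)` both solve
`w' = g/√(1-g²)`, `g' = -(n-1) tanh · g - ψ(·, w)` on `(0,∞)`, with
`ψ ≥ 0` continuous and nonincreasing in the second variable, both satisfy
`w(d₀) = h` and `g(0⁺) = -1`, then `g₁(d₀) = g₂(d₀)`. -/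
theorem stmt_16 (n : ℕ) (hn : 2 ≤ n) (d₀ h : ℝ) (hd₀ : 0 < d₀)
    (ψ : ℝ → ℝ → ℝ)
    (hψc : Continuous fun p : ℝ × ℝ => ψ p.1 p.2)
    (hψ0 : ∀ d t, 0 ≤ ψ d t)
    (hψmono : ∀ d, Antitone (ψ d))
    (w₁ g₁ w₂ g₂ : ℝ → ℝ)
    (hg₁ : ∀ d ∈ Set.Ioi (0:ℝ), g₁ d ∈ Set.Ioo (-1 : ℝ) 1)
    (hg₂ : ∀ d ∈ Set.Ioi (0:ℝ), g₂ d ∈ Set.Ioo (-1 : ℝ) 1)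
    (hw₁' : ∀ d ∈ Set.Ioi (0:ℝ),
      HasDerivAt w₁ (g₁ d / Real.sqrt (1 - g₁ d ^ 2)) d)
    (hw₂' : ∀ d ∈ Set.Ioi (0:ℝ),
      HasDerivAt w₂ (g₂ d / Real.sqrt (1 - g₂ d ^ 2)) d)
    (hg₁' : ∀ d ∈ Set.Ioi (0:ℝ),
      HasDerivAt g₁ (-(n - 1) * Real.tanh d * g₁ d - ψ d (w₁ d)) d)
    (hg₂' : ∀ d ∈ Set.Ioi (0:ℝ),
      HasDerivAt g₂ (-(n - 1) * Real.tanh d * g₂ d - ψ d (w₂ d)) d)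
    (hw₁0 : w₁ d₀ = h) (hw₂0 : w₂ d₀ = h)
    (hg₁lim : Tendsto g₁ (nhdsWithin 0 (Set.Ioi 0)) (nhds (-1)))
    (hg₂lim : Tendsto g₂ (nhdsWithin 0 (Set.Ioi 0)) (nhds (-1))) :
    g₁ d₀ = g₂ d₀ :=
  stmt_16_general n hn d₀ h hd₀ ψ hψmono w₁ g₁ w₂ g₂ hg₁ hg₂ hw₁' hw₂' hg₁' hg₂' hw₁0 hw₂0 hg₁lim
    hg₂lim
end
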